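/- Let $g \ge 1$ and let $G$ be a group containing elements $c_1,\dots,c_{2g+1}$ satisfying the braid relations. Set $d_j = c_{j+1} c_j c_{j+1}^{-1}$, $\bar d_j = c_{j+1}^{-1} c_j c_{j+1}$, and $f_j = (c_{j-1} c_{j+1})^{-1} \bar d_j (c_{j-1} c_{j+1})$ with the convention $c_0 = 1$. Then the sequence $(c_1, c_2, \dots, c_{2g+1})$ repeated $4$ times (length $8g+4$) is Hurwitz equivalent to the sequence $(d_1, d_2, \dots, d_{2g}, c_1, c_1, c_3, c_3, \dots, c_{2g-1}, c_{2g-1}, c_{2g+1}, \dots, c_{2g+1}, f_2, f_4, \dots, f_{2g}, \bar d_2, \bar d_4, \dots, \bar d_{2g})$, where $c_{2g+1}$ is repeated $2g+4$ times. -/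

import Mathlib

/-!
Pushing `c s` rightwards through the chain `d s, …, d (s + k - 1)` turns it into `c (s + k)`,
because `(d s)⁻¹ * c s * d s = c (s + 1)` is equivalent to the braid relation. With this move,
the square of `(c 1, …, c n)` is Hurwitz equivalent both to `(d 1, …, d (n - 1), c n ^ (n + 1))`
and to `(c 1 ^ (n + 1), d 1, …, d (n - 1))`. For `n = 2g + 1`, two copies of `c 1` at a time are
then pushed through the `d`-chain of the second form: they arrive as `c (2m + 3)` twice, and
moving this pair leftwards past the last two `d`'s conjugates them into `f (2m + 2)` and
`d̄ (2m + 2)`. Far commutativity, in the form "elements generated by `c`'s with indices at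
distance at least 2 commute", sorts the pieces into place.
-/

/-- One elementary (Hurwitz) transformation of sequences in a group. -/
def HurwitzStep {G : Type*} [Group G] (s t : List G) : Prop :=
  ∃ (l₁ l₂ : List G) (x y : G),
    (s = l₁ ++ x :: y :: l₂ ∧ t = l₁ ++ (x * y * x⁻¹) :: x :: l₂) ∨
    (s = l₁ ++ x :: y :: l₂ ∧ t = l₁ ++ y :: (y⁻¹ * x * y) :: l₂)

/-- Hurwitz equivalence: finitely many elementary transformations. -/
def HurwitzEquiv {G : Type*} [Group G] : List G → List G → Prop :=
  Relation.ReflTransGen HurwitzStep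

/-- The sequence `a m, a (m+1), …, a k` (ascending indices). -/
def seqAsc {G : Type*} (a : ℕ → G) (m k : ℕ) : List G :=
  (List.range (k + 1 - m)).map fun i => a (m + i)

infix:50 " ≋ " => HurwitzEquiv

namespace HurwitzStep

variable {G : Type*} [Group G] {s t : List G}

theorem symm : HurwitzStep s t → HurwitzStep t s := by
  rintro ⟨l₁, l₂, x, y, ⟨rfl, rfl⟩ | ⟨rfl, rfl⟩⟩
  · exact ⟨l₁, l₂, x * y * x⁻¹, x, Or.inr ⟨rfl, by group⟩⟩
  · exact ⟨l₁, l₂, y, y⁻¹ * x * y, Or.inl ⟨rfl, by group⟩⟩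

theorem append_left (l : List G) : HurwitzStep s t → HurwitzStep (l ++ s) (l ++ t) := by
  rintro ⟨l₁, l₂, x, y, h⟩
  exact ⟨l ++ l₁, l₂, x, y, by rcases h with ⟨rfl, rfl⟩ | ⟨rfl, rfl⟩ <;> simp⟩

theorem append_right (r : List G) : HurwitzStep s t → HurwitzStep (s ++ r) (t ++ r) := by
  rintro ⟨l₁, l₂, x, y, h⟩
  exact ⟨l₁, l₂ ++ r, x, y, by rcases h with ⟨rfl, rfl⟩ | ⟨rfl, rfl⟩ <;> simp⟩

end HurwitzStep

namespace HurwitzEquiv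

variable {G : Type*} [Group G] {s t u s' t' l : List G}

@[refl]
theorem refl (s : List G) : s ≋ s := Relation.ReflTransGen.refl

theorem symm (h : s ≋ t) : t ≋ s :=
  have : Std.Symm (HurwitzStep (G := G)) := ⟨fun _ _ ↦ HurwitzStep.symm⟩
  Std.Symm.symm (r := Relation.ReflTransGen HurwitzStep) _ _ h

theorem trans (h : s ≋ t) (h' : t ≋ u) : s ≋ u := Relation.ReflTransGen.trans h h'

instance : Trans (HurwitzEquiv (G := G)) HurwitzEquiv HurwitzEquiv := ⟨trans⟩

theorem append_left (l : List G) (h : s ≋ t) : l ++ s ≋ l ++ t :=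
  Relation.ReflTransGen.lift (l ++ ·) (fun _ _ ↦ HurwitzStep.append_left l) _ _ h

theorem append_right (r : List G) (h : s ≋ t) : s ++ r ≋ t ++ r :=
  Relation.ReflTransGen.lift (· ++ r) (fun _ _ ↦ HurwitzStep.append_right r) _ _ h

theorem append (h : s ≋ t) (h' : s' ≋ t') : s ++ s' ≋ t ++ t' :=
  (h.append_right s').trans (h'.append_left t)

theorem cons (a : G) (h : s ≋ t) : a :: s ≋ a :: t := h.append_left [a]

theorem pair_conj_left (x y : G) : [x, y] ≋ [x * y * x⁻¹, x] :=
  .single ⟨[], [], x, y, .inl ⟨rfl, rfl⟩⟩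

theorem pair_conj_right (x y : G) : [x, y] ≋ [y, y⁻¹ * x * y] :=
  .single ⟨[], [], x, y, .inr ⟨rfl, rfl⟩⟩

theorem pair_swap {x y : G} (h : Commute x y) : [x, y] ≋ [y, x] := by
  simpa [mul_assoc, h.eq] using pair_conj_right x y

theorem cons_comm {x : G} (h : ∀ a ∈ l, Commute x a) : x :: l ≋ l ++ [x] := by
  induction l with
  | nil => rfl
  | cons a l ih =>
    simp only [List.forall_mem_cons] at h
    exact ((pair_swap h.1).append_right l).trans (.cons a (ih h.2))

theorem append_comm (h : ∀ a ∈ s, ∀ b ∈ t, Commute a b) : s ++ t ≋ t ++ s := by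
  induction s with
  | nil => simp [refl]
  | cons x s ih =>
    simp only [List.forall_mem_cons] at h
    calc x :: s ++ t ≋ x :: (t ++ s) := .cons x (ih h.2)
      _ ≋ t ++ [x] ++ s := (cons_comm h.1).append_right s
      _ = t ++ x :: s := by simp

theorem triple_conj_sq (x e : G) : [x, e, e] ≋ [e, e, (e * e)⁻¹ * x * (e * e)] :=
  calc [x, e, e] ≋ [e, e⁻¹ * x * e, e] := (pair_conj_right x e).append_right [e]
    _ ≋ [e, e, e⁻¹ * (e⁻¹ * x * e) * e] := .cons e (pair_conj_right _ e)
    _ = [e, e, (e * e)⁻¹ * x * (e * e)] := by group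

end HurwitzEquiv

def seqFrom {α : Type*} (a : ℕ → α) (s k : ℕ) : List α := (List.range' s k).map a

theorem seqFrom_succ {α : Type*} (a : ℕ → α) (s k : ℕ) :
    seqFrom a s (k + 1) = a s :: seqFrom a (s + 1) k := by
  simp [seqFrom, List.range'_succ]

theorem seqFrom_concat {α : Type*} (a : ℕ → α) (s k : ℕ) :
    seqFrom a s (k + 1) = seqFrom a s k ++ [a (s + k)] := by
  simp [seqFrom, List.range'_1_concat]

namespace Daisy

variable {G : Type*} [Group G]

def d (c : ℕ → G) (i : ℕ) : G := c (i + 1) * c i * (c (i + 1))⁻¹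

def dBar (c : ℕ → G) (i : ℕ) : G := (c (i + 1))⁻¹ * c i * c (i + 1)

def f (c : ℕ → G) (j : ℕ) : G :=
  (c (j - 1) * c (j + 1))⁻¹ * dBar c j * (c (j - 1) * c (j + 1))

def oddSquares (c : ℕ → G) (m : ℕ) : List G :=
  ((List.range m).map fun j => [c (2 * j + 1), c (2 * j + 1)]).flatten

def fList (c : ℕ → G) (m : ℕ) : List G := (List.range m).map fun j => f c (2 * j + 2)

def dBarList (c : ℕ → G) (m : ℕ) : List G := (List.range m).map fun j => dBar c (2 * j + 2)

open Subgroup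

variable {c : ℕ → G}

theorem c_mem_closure {a b i : ℕ} (ha : a ≤ i) (hb : i ≤ b) :
    c i ∈ closure (c '' Set.Icc a b) :=
  subset_closure ⟨i, ⟨ha, hb⟩, rfl⟩

theorem dBar_mem_closure {a b i : ℕ} (ha : a ≤ i) (hb : i + 1 ≤ b) :
    dBar c i ∈ closure (c '' Set.Icc a b) :=
  have hc' := c_mem_closure (c := c) (by omega : a ≤ i + 1) hb
  mul_mem (mul_mem (inv_mem hc') (c_mem_closure ha (by omega))) hc'

theorem f_mem_closure (j : ℕ) : f c j ∈ closure (c '' Set.Icc (j - 1) (j + 1)) :=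
  have hc' := mul_mem (c_mem_closure (c := c) le_rfl (by omega : j - 1 ≤ j + 1))
    (c_mem_closure (by omega) le_rfl)
  mul_mem (mul_mem (inv_mem hc') (dBar_mem_closure (by omega) le_rfl)) hc'

theorem conj_sq_d_eq_dBar (i : ℕ) :
    (c (i + 1) * c (i + 1))⁻¹ * d c i * (c (i + 1) * c (i + 1)) = dBar c i := by
  simp only [d, dBar]
  group

structure SatisfiesBraidRelations (c : ℕ → G) (n : ℕ) : Prop where
  braid : ∀ i, 1 ≤ i → i + 1 ≤ n → c i * c (i + 1) * c i = c (i + 1) * c i * c (i + 1)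
  commute : ∀ i j, 1 ≤ i → j ≤ n → i + 2 ≤ j → Commute (c i) (c j)

namespace SatisfiesBraidRelations

variable {n : ℕ} (hc : SatisfiesBraidRelations c n)
include hc

theorem inv_d_mul_mul_d {i : ℕ} (hi : 1 ≤ i) (hin : i + 1 ≤ n) :
    (d c i)⁻¹ * c i * d c i = c (i + 1) :=
  calc (d c i)⁻¹ * c i * d c i
      = c (i + 1) * (c i)⁻¹ * (c (i + 1))⁻¹ * (c i * c (i + 1) * c i) * (c (i + 1))⁻¹ := by
        simp only [d]; group
    _ = c (i + 1) := by rw [hc.braid i hi hin]; group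

theorem inv_mul_mul_eq_d {i : ℕ} (hi : 1 ≤ i) (hin : i + 1 ≤ n) :
    (c i)⁻¹ * c (i + 1) * c i = d c i :=
  calc (c i)⁻¹ * c (i + 1) * c i
      = (c i)⁻¹ * (c (i + 1) * c i * c (i + 1)) * (c (i + 1))⁻¹ := by group
    _ = d c i := by rw [← hc.braid i hi hin, d]; group

theorem conj_sq_d_eq_f {i : ℕ} (hi : 1 ≤ i) (hin : i + 2 ≤ n) :
    (c (i + 2) * c (i + 2))⁻¹ * d c i * (c (i + 2) * c (i + 2)) = f c (i + 1) :=
  calc (c (i + 2) * c (i + 2))⁻¹ * d c i * (c (i + 2) * c (i + 2))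
      = (c i * c (i + 2) * c (i + 2))⁻¹ * c (i + 1) * (c i * c (i + 2) * c (i + 2)) := by
        rw [← hc.inv_mul_mul_eq_d hi (by omega)]; group
    _ = (c (i + 2) * c i * c (i + 2))⁻¹ * c (i + 1) * (c (i + 2) * c i * c (i + 2)) := by
        rw [(hc.commute i (i + 2) hi hin le_rfl).eq]
    _ = (c i * c (i + 2))⁻¹ * ((c (i + 2))⁻¹ * c (i + 1) * c (i + 2)) *
          (c i * c (i + 2)) := by
        group

theorem commute_of_mem_closure {a b a' b' : ℕ} (ha : 1 ≤ a) (hgap : b + 2 ≤ a')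
    (hb' : b' ≤ n) {x y : G} (hx : x ∈ closure (c '' Set.Icc a b))
    (hy : y ∈ closure (c '' Set.Icc a' b')) : Commute x y := by
  have : closure (c '' Set.Icc a' b') ≤ centralizer (closure (c '' Set.Icc a b)) := by
    rw [centralizer_closure, closure_le]
    rintro _ ⟨j, ⟨hj₁, hj₂⟩, rfl⟩ _ ⟨i, ⟨hi₁, hi₂⟩, rfl⟩
    exact (hc.commute i j (by omega) (by omega) (by omega)).eq
  exact mem_centralizer_iff.mp (this hy) x hx

/-- Both are conjugates by `c (i + 1)`: of `c i`, and of an element generated by `c (i + 2)` and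
`c (i + 3)`. -/
theorem commute_dBar_f {i : ℕ} (hi : 1 ≤ i) (hin : i + 3 ≤ n) :
    Commute (dBar c i) (f c (i + 2)) := by
  have hf : f c (i + 2) =
      (c (i + 1))⁻¹ * ((c (i + 3))⁻¹ * dBar c (i + 2) * c (i + 3)) * c (i + 1) :=
    calc f c (i + 2)
        = (c (i + 1) * c (i + 3))⁻¹ * dBar c (i + 2) * (c (i + 1) * c (i + 3)) := rfl
      _ = (c (i + 3) * c (i + 1))⁻¹ * dBar c (i + 2) * (c (i + 3) * c (i + 1)) := by
        rw [(hc.commute (i + 1) (i + 3) (by omega) hin le_rfl).eq]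
      _ = _ := by group
  have hy : (c (i + 3))⁻¹ * dBar c (i + 2) * c (i + 3) ∈
      closure (c '' Set.Icc (i + 2) (i + 3)) :=
    mul_mem (mul_mem (inv_mem (c_mem_closure (by omega) le_rfl))
      (dBar_mem_closure le_rfl le_rfl)) (c_mem_closure (by omega) le_rfl)
  rw [hf]
  simpa only [dBar, inv_inv] using
    (hc.commute_of_mem_closure hi le_rfl hin (c_mem_closure le_rfl le_rfl) hy).conj (c (i + 1))⁻¹

theorem pair_c_d {s : ℕ} (hs : 1 ≤ s) (hsn : s + 1 ≤ n) :
    [c s, d c s] ≋ [d c s, c (s + 1)] :=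
  hc.inv_d_mul_mul_d hs hsn ▸ .pair_conj_right _ _

theorem cons_seqFrom_d {s : ℕ} (k : ℕ) (hs : 1 ≤ s) (hsk : s + k ≤ n) :
    c s :: seqFrom (d c) s k ≋ seqFrom (d c) s k ++ [c (s + k)] := by
  induction k generalizing s with
  | zero => simp [seqFrom]; rfl
  | succ k ih =>
    calc c s :: seqFrom (d c) s (k + 1)
        = [c s, d c s] ++ seqFrom (d c) (s + 1) k := by simp [seqFrom_succ]
      _ ≋ [d c s, c (s + 1)] ++ seqFrom (d c) (s + 1) k :=
        (hc.pair_c_d hs (by omega)).append_right _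
      _ ≋ d c s :: (seqFrom (d c) (s + 1) k ++ [c (s + 1 + k)]) :=
        .cons _ (ih (by omega) (by omega))
      _ = seqFrom (d c) s (k + 1) ++ [c (s + (k + 1))] := by
        simp [seqFrom_succ, Nat.add_right_comm, Nat.add_assoc]

theorem replicate_append_seqFrom_d {s : ℕ} (m k : ℕ) (hs : 1 ≤ s) (hsk : s + k ≤ n) :
    List.replicate m (c s) ++ seqFrom (d c) s k ≋
      seqFrom (d c) s k ++ List.replicate m (c (s + k)) := by
  induction m with
  | zero => simp; rfl
  | succ m ih =>
    calc List.replicate (m + 1) (c s) ++ seqFrom (d c) s k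
        ≋ c s :: (seqFrom (d c) s k ++ List.replicate m (c (s + k))) := .cons _ ih
      _ ≋ (seqFrom (d c) s k ++ [c (s + k)]) ++ List.replicate m (c (s + k)) :=
        (hc.cons_seqFrom_d k hs hsk).append_right _
      _ = seqFrom (d c) s k ++ List.replicate (m + 1) (c (s + k)) := by
        simp [List.replicate_succ]

theorem seqFrom_append_self_equiv_d_replicate {s : ℕ} (k : ℕ) (hs : 1 ≤ s)
    (hsk : s + k ≤ n) :
    seqFrom c s (k + 1) ++ seqFrom c s (k + 1) ≋
      seqFrom (d c) s k ++ List.replicate (k + 2) (c (s + k)) := by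
  induction k generalizing s with
  | zero => simp [seqFrom]; rfl
  | succ k ih =>
    have hT : ∀ a ∈ seqFrom c (s + 2) k, ∀ b ∈ [c s], Commute a b := by
      simp only [seqFrom, List.mem_map, List.mem_range'_1, List.mem_singleton]
      rintro _ ⟨i, hi, rfl⟩ _ rfl
      exact (hc.commute s i hs (by omega) (by omega)).symm
    set T := seqFrom c (s + 2) k
    calc seqFrom c s (k + 1 + 1) ++ seqFrom c s (k + 1 + 1)
        = c s :: c (s + 1) :: (T ++ [c s]) ++ c (s + 1) :: T := by simp [T, seqFrom_succ]
      _ ≋ c s :: c (s + 1) :: ([c s] ++ T) ++ c (s + 1) :: T :=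
          .append_right _ (.cons _ (.cons _ (.append_comm hT)))
      _ = c s :: ([c (s + 1), c s] ++ (T ++ c (s + 1) :: T)) := by simp
      _ ≋ c s :: ([d c s, c (s + 1)] ++ (T ++ c (s + 1) :: T)) :=
          .cons _ (.append_right _ (.pair_conj_left _ _))
      _ = [c s, d c s] ++ (seqFrom c (s + 1) (k + 1) ++ seqFrom c (s + 1) (k + 1)) := by
          simp [T, seqFrom_succ]
      _ ≋ [d c s, c (s + 1)] ++ (seqFrom c (s + 1) (k + 1) ++ seqFrom c (s + 1) (k + 1)) :=
          .append_right _ (hc.pair_c_d hs (by omega))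
      _ ≋ [d c s] ++ (c (s + 1) :: seqFrom (d c) (s + 1) k) ++
            List.replicate (k + 2) (c (s + 1 + k)) := by
          simpa using .cons (d c s) (.cons (c (s + 1)) (ih (by omega) (by omega)))
      _ ≋ [d c s] ++ (seqFrom (d c) (s + 1) k ++ [c (s + 1 + k)]) ++
            List.replicate (k + 2) (c (s + 1 + k)) :=
          .append_right _ (.append_left _ (hc.cons_seqFrom_d k (by omega) (by omega)))
      _ = seqFrom (d c) s (k + 1) ++ List.replicate (k + 1 + 2) (c (s + (k + 1))) := by
          simp [seqFrom_succ, List.replicate_succ, Nat.add_right_comm, Nat.add_assoc]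

theorem seqFrom_append_self_equiv_replicate_d {s : ℕ} (k : ℕ) (hs : 1 ≤ s)
    (hsk : s + k ≤ n) :
    seqFrom c s (k + 1) ++ seqFrom c s (k + 1) ≋
      List.replicate (k + 2) (c s) ++ seqFrom (d c) s k :=
  (hc.seqFrom_append_self_equiv_d_replicate k hs hsk).trans
    (hc.replicate_append_seqFrom_d (k + 2) k hs hsk).symm

theorem pair_d_append_sq {i : ℕ} (hi : 1 ≤ i) (hin : i + 2 ≤ n) :
    [d c i, d c (i + 1), c (i + 2), c (i + 2)] ≋
      [c (i + 2), c (i + 2), f c (i + 1), dBar c (i + 1)] :=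
  calc [d c i, d c (i + 1), c (i + 2), c (i + 2)]
      ≋ [d c i] ++ [c (i + 2), c (i + 2), dBar c (i + 1)] :=
        .append_left [d c i]
          (conj_sq_d_eq_dBar (c := c) (i + 1) ▸
            HurwitzEquiv.triple_conj_sq (d c (i + 1)) (c (i + 2)))
    _ ≋ [c (i + 2), c (i + 2), f c (i + 1)] ++ [dBar c (i + 1)] :=
        .append_right _
          (hc.conj_sq_d_eq_f hi hin ▸ HurwitzEquiv.triple_conj_sq (d c i) (c (i + 2)))

theorem commute_fList_append_dBarList_c {m : ℕ} (hm : 2 * m + 3 ≤ n) :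
    ∀ a ∈ fList c m ++ dBarList c m, Commute a (c (2 * m + 3)) := by
  simp only [fList, dBarList, List.mem_append, List.mem_map, List.mem_range]
  rintro _ (⟨j, hj, rfl⟩ | ⟨j, hj, rfl⟩)
  · exact hc.commute_of_mem_closure (by omega) (by omega) hm (f_mem_closure _)
      (c_mem_closure le_rfl le_rfl)
  · exact hc.commute_of_mem_closure (by omega) (by omega) hm
      (dBar_mem_closure le_rfl le_rfl) (c_mem_closure le_rfl le_rfl)

theorem commute_dBarList_f {m : ℕ} (hm : 2 * m + 3 ≤ n) :
    ∀ a ∈ dBarList c m, Commute a (f c (2 * m + 2)) := by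
  simp only [dBarList, List.mem_map, List.mem_range]
  rintro _ ⟨j, hj, rfl⟩
  by_cases hjm : j + 1 = m
  · have := hc.commute_dBar_f (i := 2 * j + 2) (by omega) (by omega)
    rwa [show 2 * j + 2 + 2 = 2 * m + 2 by omega] at this
  · exact hc.commute_of_mem_closure (by omega) (by omega) hm
      (dBar_mem_closure le_rfl le_rfl) (f_mem_closure _)

theorem replicate_one_append_seqFrom_d (m : ℕ) (hm : 2 * m + 1 ≤ n) :
    List.replicate (2 * m + 2) (c 1) ++ seqFrom (d c) 1 (2 * m) ≋
      oddSquares c m ++ [c (2 * m + 1), c (2 * m + 1)] ++ fList c m ++ dBarList c m := by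
  induction m with
  | zero => simp [oddSquares, fList, dBarList, seqFrom]; rfl
  | succ m ih =>
    set e := c (2 * m + 3)
    set O := oddSquares c m ++ [c (2 * m + 1), c (2 * m + 1)]
    calc List.replicate (2 * (m + 1) + 2) (c 1) ++ seqFrom (d c) 1 (2 * (m + 1))
        = List.replicate (2 * m + 2) (c 1) ++
            (List.replicate 2 (c 1) ++ seqFrom (d c) 1 (2 * m + 2)) := by
          rw [← List.append_assoc, ← List.replicate_add]; rfl
      _ ≋ List.replicate (2 * m + 2) (c 1) ++
            (seqFrom (d c) 1 (2 * m + 2) ++ List.replicate 2 (c (1 + (2 * m + 2)))) :=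
          .append_left _ (hc.replicate_append_seqFrom_d 2 _ le_rfl (by omega))
      _ = (List.replicate (2 * m + 2) (c 1) ++ seqFrom (d c) 1 (2 * m)) ++
            [d c (2 * m + 1), d c (2 * m + 2), e, e] := by
          simp [e, seqFrom_concat, Nat.add_comm 1, Nat.add_assoc]
      _ ≋ (O ++ fList c m ++ dBarList c m) ++ [e, e, f c (2 * m + 2), dBar c (2 * m + 2)] :=
          .append (ih (by omega)) (hc.pair_d_append_sq (by omega) (by omega))
      _ = O ++ ((fList c m ++ dBarList c m) ++ [e, e]) ++
            ([f c (2 * m + 2)] ++ [dBar c (2 * m + 2)]) := by simp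
      _ ≋ O ++ ([e, e] ++ (fList c m ++ dBarList c m)) ++
            ([f c (2 * m + 2)] ++ [dBar c (2 * m + 2)]) :=
          .append_right _ (.append_left _ (.append_comm
            (by simpa using hc.commute_fList_append_dBarList_c (by omega))))
      _ = (O ++ [e, e] ++ fList c m) ++ (dBarList c m ++ [f c (2 * m + 2)]) ++
            [dBar c (2 * m + 2)] := by simp
      _ ≋ (O ++ [e, e] ++ fList c m) ++ ([f c (2 * m + 2)] ++ dBarList c m) ++
            [dBar c (2 * m + 2)] :=
          .append_right _ (.append_left _ (.append_comm
            (by simpa using hc.commute_dBarList_f (by omega))))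
      _ = oddSquares c (m + 1) ++ [c (2 * (m + 1) + 1), c (2 * (m + 1) + 1)] ++
            fList c (m + 1) ++ dBarList c (m + 1) := by
          simp [O, e, oddSquares, fList, dBarList, List.range_succ, Nat.mul_succ]

theorem seqFrom_four_times_equiv {g : ℕ} (hg : 2 * g + 1 ≤ n) :
    seqFrom c 1 (2 * g + 1) ++ seqFrom c 1 (2 * g + 1) ++
        seqFrom c 1 (2 * g + 1) ++ seqFrom c 1 (2 * g + 1) ≋
      seqFrom (d c) 1 (2 * g) ++ oddSquares c g ++
        List.replicate (2 * g + 4) (c (2 * g + 1)) ++ fList c g ++ dBarList c g := by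
  set C := seqFrom c 1 (2 * g + 1)
  set D := seqFrom (d c) 1 (2 * g)
  set E := List.replicate (2 * g + 2) (c (2 * g + 1))
  have hodd : ∀ a ∈ E, ∀ b ∈ oddSquares c g, Commute a b := by
    simp only [E, oddSquares, List.mem_replicate, List.mem_flatten, List.mem_map, List.mem_range]
    rintro _ ⟨-, rfl⟩ b ⟨_, ⟨j, hj, rfl⟩, hb⟩
    obtain rfl : b = c (2 * j + 1) := by simpa using hb
    exact (hc.commute _ _ (by omega) hg (by omega)).symm
  calc C ++ C ++ C ++ C = (C ++ C) ++ (C ++ C) := by simp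
    _ ≋ (D ++ E) ++ (List.replicate (2 * g + 2) (c 1) ++ D) := by
      refine .append ?_ (hc.seqFrom_append_self_equiv_replicate_d _ le_rfl (by omega))
      simpa [E, Nat.add_comm 1] using
        hc.seqFrom_append_self_equiv_d_replicate (2 * g) le_rfl (by omega)
    _ ≋ (D ++ E) ++ (oddSquares c g ++ [c (2 * g + 1), c (2 * g + 1)] ++ fList c g ++
          dBarList c g) :=
      .append_left _ (hc.replicate_one_append_seqFrom_d g hg)
    _ = D ++ (E ++ oddSquares c g) ++
          ([c (2 * g + 1), c (2 * g + 1)] ++ fList c g ++ dBarList c g) := by simp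
    _ ≋ D ++ (oddSquares c g ++ E) ++
          ([c (2 * g + 1), c (2 * g + 1)] ++ fList c g ++ dBarList c g) :=
      .append_right _ (.append_left _ (.append_comm hodd))
    _ = _ := by
      rw [show 2 * g + 4 = 2 * g + 2 + 2 from rfl, List.replicate_add (2 * g + 2) 2]
      simp only [List.append_assoc]
      rfl

end SatisfiesBraidRelations

end Daisy

open Daisy in
theorem statement12_general {G : Type*} [Group G] (g : ℕ) (c : ℕ → G)
    (hbraid : ∀ i, 1 ≤ i → i + 1 ≤ 2 * g + 1 →
      c i * c (i + 1) * c i = c (i + 1) * c i * c (i + 1))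
    (hcomm : ∀ i j, 1 ≤ i → j ≤ 2 * g + 1 → i + 2 ≤ j → c i * c j = c j * c i) :
    HurwitzEquiv
      (seqAsc c 1 (2 * g + 1) ++ seqAsc c 1 (2 * g + 1) ++
        seqAsc c 1 (2 * g + 1) ++ seqAsc c 1 (2 * g + 1))
      (((List.range (2 * g)).map fun j => c (j + 2) * c (j + 1) * (c (j + 2))⁻¹) ++
        (((List.range g).map fun j => [c (2 * j + 1), c (2 * j + 1)]).flatten) ++
        List.replicate (2 * g + 4) (c (2 * g + 1)) ++
        ((List.range g).map fun j =>
          (c (2 * j + 1) * c (2 * j + 3))⁻¹ *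
            ((c (2 * j + 3))⁻¹ * c (2 * j + 2) * c (2 * j + 3)) *
            (c (2 * j + 1) * c (2 * j + 3))) ++
        ((List.range g).map fun j =>
          (c (2 * j + 3))⁻¹ * c (2 * j + 2) * c (2 * j + 3))) := by
  have hC : seqAsc c 1 (2 * g + 1) = seqFrom c 1 (2 * g + 1) := by
    simp [seqAsc, seqFrom, List.range'_eq_map_range]
  have hD : ((List.range (2 * g)).map fun j => c (j + 2) * c (j + 1) * (c (j + 2))⁻¹) =
      seqFrom (d c) 1 (2 * g) := by
    simp only [seqFrom, List.range'_eq_map_range, List.map_map]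
    exact List.map_congr_left fun j _ ↦ by simp only [Function.comp, d, Nat.add_comm 1]
  rw [hC, hD]
  exact SatisfiesBraidRelations.seqFrom_four_times_equiv ⟨hbraid, hcomm⟩ le_rfl

/-- with `d j = c (j+1) * c j * (c (j+1))⁻¹`,
`d̄ j = (c (j+1))⁻¹ * c j * c (j+1)`,
`f j = (c (j-1) * c (j+1))⁻¹ * d̄ j * (c (j-1) * c (j+1))` and the convention `c 0 = 1`,
the sequence `(c 1, …, c (2g+1))` repeated `4` times is Hurwitz equivalent to
`(d 1, …, d (2g), c 1, c 1, c 3, c 3, …, c (2g-1), c (2g-1), (c (2g+1))^{2g+4},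
f 2, f 4, …, f (2g), d̄ 2, d̄ 4, …, d̄ (2g))`. -/
theorem statement12 {G : Type*} [Group G] (g : ℕ) (hg : 1 ≤ g) (c : ℕ → G)
    (hc0 : c 0 = 1)
    (hbraid : ∀ i, 1 ≤ i → i + 1 ≤ 2 * g + 1 →
      c i * c (i + 1) * c i = c (i + 1) * c i * c (i + 1))
    (hcomm : ∀ i j, 1 ≤ i → j ≤ 2 * g + 1 → i + 2 ≤ j → c i * c j = c j * c i) :
    HurwitzEquiv
      (seqAsc c 1 (2 * g + 1) ++ seqAsc c 1 (2 * g + 1) ++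
        seqAsc c 1 (2 * g + 1) ++ seqAsc c 1 (2 * g + 1))
      (((List.range (2 * g)).map fun j => c (j + 2) * c (j + 1) * (c (j + 2))⁻¹) ++
        (((List.range g).map fun j => [c (2 * j + 1), c (2 * j + 1)]).flatten) ++
        List.replicate (2 * g + 4) (c (2 * g + 1)) ++
        ((List.range g).map fun j =>
          (c (2 * j + 1) * c (2 * j + 3))⁻¹ *
            ((c (2 * j + 3))⁻¹ * c (2 * j + 2) * c (2 * j + 3)) *
            (c (2 * j + 1) * c (2 * j + 3))) ++
        ((List.range g).map fun j =>
          (c (2 * j + 3))⁻¹ * c (2 * j + 2) * c (2 * j + 3))) :=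
  statement12_general g c hbraid hcomm
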